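/- Let G be a moral DAG (a DAG with no v-structures) with covered edge x→y, and let G' be the DAG obtained from G by reversing x→y to y→x. Suppose b is a vertex with b ∉ {x,y} such that b is a direct child of y in G (y→b is an edge of G and there is no directed path in G from y to b of length at least 2) and x→b is an edge of G. Then y→b is a covered edge of G if and only if x→b is a covered edge of G'. -/

import Mathlib

/-- A directed graph (given by its edge relation) is a DAG if it has no directed cycles. -/
def IsDAG {V : Type*} (E : V → V → Prop) : Prop :=
  ∀ v : V, ¬ Relation.TransGen E v v

/-- The set of parents of `v` in the directed graph `E`. -/
def parents {V : Type*} (E : V → V → Prop) (v : V) : Set V := {u | E u v}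

/-- An arc `x → y` of `E` is a covered edge if `Pa(x) = Pa(y) \ {x}`. -/
def CoveredEdge {V : Type*} (E : V → V → Prop) (x y : V) : Prop :=
  E x y ∧ parents E x = parents E y \ {x}

/-- The set of covered edges of `E`, as ordered pairs. -/
def coveredEdges {V : Type*} (E : V → V → Prop) : Set (V × V) :=
  {p | CoveredEdge E p.1 p.2}

/-- The skeleton (undirected adjacency) of a directed graph. -/
def Skel {V : Type*} (E : V → V → Prop) (u v : V) : Prop := E u v ∨ E v u

/-- `(u, v, w)` is a v-structure: `u → v ← w` with `u ≠ w` non-adjacent. -/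
def VStruct {V : Type*} (E : V → V → Prop) (u v w : V) : Prop :=
  u ≠ w ∧ E u v ∧ E w v ∧ ¬ Skel E u w

/-- Two directed graphs are Markov equivalent: same skeleton and same v-structures. -/
def MarkovEquiv {V : Type*} (E E' : V → V → Prop) : Prop :=
  (∀ u v, Skel E u v ↔ Skel E' u v) ∧ (∀ u v w, VStruct E u v w ↔ VStruct E' u v w)

/-- Minimum vertex cover number of a set of (directed) edges. -/
noncomputable def mvc {V : Type*} [Fintype V] (F : Set (V × V)) : ℕ :=
  sInf {n | ∃ S : Finset V, (∀ p ∈ F, p.1 ∈ S ∨ p.2 ∈ S) ∧ S.card = n}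

/-- The graph obtained from `E` by reversing the arc `x → y` to `y → x`. -/
def reverseEdge {V : Type*} (E : V → V → Prop) (x y : V) : V → V → Prop :=
  fun u v => (E u v ∧ ¬(u = x ∧ v = y)) ∨ (u = y ∧ v = x)

/-- A moral DAG is a DAG with no v-structures. -/
def Moral {V : Type*} (E : V → V → Prop) : Prop := ∀ u v w, ¬ VStruct E u v w

/-- `w` is a direct child of `v`: `v → w` is an arc and there is no directed
path from `v` to `w` of length at least 2 (i.e. through an intermediate vertex). -/
def DirectChild {V : Type*} (E : V → V → Prop) (v w : V) : Prop :=
  E v w ∧ ∀ z : V, ¬ (Relation.TransGen E v z ∧ Relation.TransGen E z w)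


/-
Only parent sets matter. Reversing `x → y` adds `y` to the parents of `x` and leaves those of
`b ∉ {x, y}` alone, so with `P = Pa_G` the claim reads
`P y = P b \ {y} ↔ insert y (P x) = P b \ {x}`. Substituting `P x = P y \ {x}`, this is a
set identity that holds because `x, y ∈ P b`, `x ∈ P y` and `y ∉ P y`.
-/

theorem Set.eq_diff_singleton_iff_insert_diff_singleton_eq {α : Type*} {B C : Set α} {a b : α}
    (hab : a ≠ b) (haB : a ∈ B) (hbB : b ∉ B) (haC : a ∈ C) (hbC : b ∈ C) :
    B = C \ {b} ↔ insert b (B \ {a}) = C \ {a} := by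
  simp only [Set.ext_iff, Set.mem_insert_iff, Set.mem_sdiff, Set.mem_singleton_iff]
  constructor
  · intro h u
    by_cases hub : u = b
    · subst hub; simp [hbC, hab.symm]
    · grind
  · intro h u
    by_cases hua : u = a
    · subst hua; simp [haB, haC, hab]
    · grind

theorem IsDAG.irrefl {V : Type*} {E : V → V → Prop} (hE : IsDAG E) (v : V) : ¬ E v v :=
  fun h => hE v (.single h)

section reverseEdge

variable {V : Type*} {E : V → V → Prop} {x y : V}

theorem reverseEdge_iff_of_ne {u v : V} (hvx : v ≠ x) (hvy : v ≠ y) :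
    reverseEdge E x y u v ↔ E u v := by
  simp [reverseEdge, hvx, hvy]

theorem parents_reverseEdge_left (hxy : x ≠ y) :
    parents (reverseEdge E x y) x = insert y (parents E x) := by
  ext u
  simp [parents, reverseEdge, hxy, or_comm]

theorem parents_reverseEdge_of_ne {v : V} (hvx : v ≠ x) (hvy : v ≠ y) :
    parents (reverseEdge E x y) v = parents E v := by
  ext u
  simp [parents, reverseEdge_iff_of_ne hvx hvy]

end reverseEdge

theorem coveredEdge_reverse_child_case_general
    {V : Type*} (E : V → V → Prop) (x y b : V)
    (hE : IsDAG E) (hxy : CoveredEdge E x y)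
    (hbx : b ≠ x) (hby : b ≠ y) (hchild : DirectChild E y b) (hxb : E x b) :
    CoveredEdge E y b ↔ CoveredEdge (reverseEdge E x y) x b := by
  obtain ⟨hExy, hpar⟩ := hxy
  have hyb : E y b := hchild.1
  have hne : x ≠ y := fun h => hE.irrefl x (h ▸ hExy)
  have hxb' : reverseEdge E x y x b := (reverseEdge_iff_of_ne hbx hby).2 hxb
  rw [CoveredEdge, CoveredEdge, and_iff_right hyb, and_iff_right hxb',
    parents_reverseEdge_left hne, parents_reverseEdge_of_ne hbx hby, hpar]
  exact Set.eq_diff_singleton_iff_insert_diff_singleton_eq hne hExy (hE.irrefl y) hxb hyb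

/-- In a moral DAG with covered edge `x → y`, if `b ∉ {x, y}` is a direct child of `y`
and `x → b` is an arc, then `y → b` is a covered edge of the DAG if and only if `x → b`
is a covered edge of the DAG obtained by reversing `x → y`. -/
theorem coveredEdge_reverse_child_case
    {V : Type*} (E : V → V → Prop) (x y b : V)
    (hE : IsDAG E) (hm : Moral E) (hxy : CoveredEdge E x y)
    (hbx : b ≠ x) (hby : b ≠ y) (hchild : DirectChild E y b) (hxb : E x b) :
    CoveredEdge E y b ↔ CoveredEdge (reverseEdge E x y) x b :=
  coveredEdge_reverse_child_case_general E x y b hE hxy hbx hby hchild hxb
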